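/- (Turinici) Let (X, d, ≤) be an ordered metric space and f a self-map on X such that: (a) (X, d) is complete; (b) for all x, y ∈ X, x ≺≻ y implies f(x) ≺≻ f(y); (c) (X, d, ≤) satisfies: for every sequence (x_n) converging to x whose consecutive terms are comparable, there exists a subsequence (x_{n_k}) every term of which is comparable to the limit x; (d) there exists x₀ ∈ X with x₀ ≺≻ f(x₀); (e) there exists α ∈ [0,1) such that d(f(x), f(y)) ≤ α·d(x, y) for all x, y ∈ X with x ≤ y; (f) for each x, y ∈ X, the set C(x, y, ≺≻) of ≺≻-chains between x and y in X is nonempty. Then f has a unique fixed point z, and moreover for each x ∈ X the sequence of iterates fⁿ(x) converges to z. -/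

import Mathlib

open Filter Topology

section

variable {X : Type*} [MetricSpace X] [PartialOrder X]

/-- Two elements of an ordered set are comparable. -/
def Cmp (x y : X) : Prop := x ≤ y ∨ y ≤ x

/-- `f` is `g`-comparable: `g x ≺≻ g y` implies `f x ≺≻ f y`. -/
def GComparable (f g : X → X) : Prop :=
  ∀ x y : X, Cmp (g x) (g y) → Cmp (f x) (f y)

/-- The `g`-TCC property of an ordered metric space. -/
def GTCC (g : X → X) : Prop :=
  ∀ (x : ℕ → X) (l : X), (∀ n, Cmp (x n) (x (n + 1))) →
    Tendsto x atTop (𝓝 l) →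
      ∃ φ : ℕ → ℕ, StrictMono φ ∧ ∀ k, Cmp (g (x (φ k))) (g l)

/-- The TCC property of a subset of an ordered metric space. -/
def TCCOn (Y : Set X) : Prop :=
  ∀ (x : ℕ → X), (∀ n, x n ∈ Y) → ∀ l ∈ Y, (∀ n, Cmp (x n) (x (n + 1))) →
    Tendsto x atTop (𝓝 l) →
      ∃ φ : ℕ → ℕ, StrictMono φ ∧ ∀ k, Cmp (x (φ k)) l

/-- The TCC property of an ordered metric space. -/
def TCC (X : Type*) [MetricSpace X] [PartialOrder X] : Prop :=
  ∀ (x : ℕ → X) (l : X), (∀ n, Cmp (x n) (x (n + 1))) →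
    Tendsto x atTop (𝓝 l) →
      ∃ φ : ℕ → ℕ, StrictMono φ ∧ ∀ k, Cmp (x (φ k)) l

/-- The pair `(f, g)` is compatible. -/
def Compatible (f g : X → X) : Prop :=
  ∀ (x : ℕ → X) (l : X), Tendsto (fun n => g (x n)) atTop (𝓝 l) →
    Tendsto (fun n => f (x n)) atTop (𝓝 l) →
      Tendsto (fun n => dist (g (f (x n))) (f (g (x n)))) atTop (𝓝 0)

/-- `f` is `g`-continuous. -/
def GContinuous (f g : X → X) : Prop :=
  ∀ (x : ℕ → X) (a : X), Tendsto (fun n => g (x n)) atTop (𝓝 (g a)) →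
    Tendsto (fun n => f (x n)) atTop (𝓝 (f a))

/-- There exists a `≺≻`-chain between `a` and `b` inside `E`. -/
def ChainIn (E : Set X) (a b : X) : Prop :=
  ∃ (k : ℕ) (e : ℕ → X), 2 ≤ k ∧ (∀ i < k, e i ∈ E) ∧ e 0 = a ∧ e (k - 1) = b ∧
    ∀ i, i + 1 < k → Cmp (e i) (e (i + 1))

end

/-!
Iterating `f` from a point comparable with its image gives a Cauchy sequence of consecutively
comparable points; by TCC a subsequence is comparable with the limit `z`, where `f` contracts,
so `f z = z`. Along a comparability chain from `x` to `z` the iterates of consecutive links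
approach each other geometrically, so `fⁿ x → fⁿ z = z`; this also forces uniqueness.
-/

section Order

variable {X : Type*} [PartialOrder X] {f : X → X} {x y : X}

theorem Cmp.iterate (hf : ∀ x y : X, Cmp x y → Cmp (f x) (f y)) (h : Cmp x y) (n : ℕ) :
    Cmp (f^[n] x) (f^[n] y) := by
  induction n with
  | zero => exact h
  | succ n ih => simpa only [Function.iterate_succ_apply'] using hf _ _ ih

theorem ChainIn.reflTransGen {E : Set X} {a b : X} (h : ChainIn E a b) :
    Relation.ReflTransGen Cmp a b := by
  obtain ⟨k, e, hk, -, rfl, rfl, he⟩ := h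
  suffices ∀ j < k, Relation.ReflTransGen Cmp (e 0) (e j) from this (k - 1) (by omega)
  intro j hj
  induction j with
  | zero => exact .refl
  | succ j ih => exact (ih (by omega)).tail (he j hj)

end Order

section Metric

variable {X : Type*} [MetricSpace X] [PartialOrder X] {f : X → X} {α : ℝ} {x y z : X}

theorem dist_le_of_cmp (hα : ∀ x y : X, x ≤ y → dist (f x) (f y) ≤ α * dist x y)
    (h : Cmp x y) : dist (f x) (f y) ≤ α * dist x y := by
  rcases h with h | h
  · exact hα x y h
  · simpa only [dist_comm] using hα y x h

theorem dist_iterate_le_of_cmp (hf : ∀ x y : X, Cmp x y → Cmp (f x) (f y))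
    (hα : ∀ x y : X, x ≤ y → dist (f x) (f y) ≤ α * dist x y) (hα0 : 0 ≤ α)
    (h : Cmp x y) (n : ℕ) : dist (f^[n] x) (f^[n] y) ≤ α ^ n * dist x y := by
  induction n with
  | zero => simp
  | succ n ih =>
    simp only [Function.iterate_succ_apply']
    calc dist (f (f^[n] x)) (f (f^[n] y)) ≤ α * dist (f^[n] x) (f^[n] y) :=
          dist_le_of_cmp hα (h.iterate hf n)
      _ ≤ α * (α ^ n * dist x y) := mul_le_mul_of_nonneg_left ih hα0
      _ = α ^ (n + 1) * dist x y := by ring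

theorem cauchySeq_iterate_of_cmp (hf : ∀ x y : X, Cmp x y → Cmp (f x) (f y))
    (hα : ∀ x y : X, x ≤ y → dist (f x) (f y) ≤ α * dist x y) (hα0 : 0 ≤ α) (hα1 : α < 1)
    (hx : Cmp x (f x)) : CauchySeq fun n => f^[n] x := by
  refine cauchySeq_of_le_geometric α (dist x (f x)) hα1 fun n => ?_
  rw [Function.iterate_succ_apply, mul_comm]
  exact dist_iterate_le_of_cmp hf hα hα0 hx n

theorem isFixedPt_of_tendsto_iterate_of_tcc (hf : ∀ x y : X, Cmp x y → Cmp (f x) (f y))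
    (hα : ∀ x y : X, x ≤ y → dist (f x) (f y) ≤ α * dist x y) (hc : TCC X)
    (hx : Cmp x (f x)) (hz : Tendsto (fun n => f^[n] x) atTop (𝓝 z)) :
    Function.IsFixedPt f z := by
  have hconsec (n : ℕ) : Cmp (f^[n] x) (f^[n + 1] x) := by
    simpa only [Function.iterate_succ_apply] using hx.iterate hf n
  obtain ⟨φ, hφ, hφz⟩ := hc _ z hconsec hz
  have hsub : Tendsto (fun k => f^[φ k] x) atTop (𝓝 z) := hz.comp hφ.tendsto_atTop
  have hto_z : Tendsto (fun k => f (f^[φ k] x)) atTop (𝓝 z) := by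
    simp only [← Function.iterate_succ_apply' f]
    exact ((tendsto_add_atTop_iff_nat 1).2 hz).comp hφ.tendsto_atTop
  have hto_fz : Tendsto (fun k => f (f^[φ k] x)) atTop (𝓝 (f z)) := by
    rw [tendsto_iff_dist_tendsto_zero] at hsub ⊢
    refine squeeze_zero (fun _ => dist_nonneg) (fun k => dist_le_of_cmp hα (hφz k)) ?_
    simpa using hsub.const_mul α
  exact tendsto_nhds_unique hto_fz hto_z

theorem tendsto_dist_iterate_of_reflTransGen (hf : ∀ x y : X, Cmp x y → Cmp (f x) (f y))
    (hα : ∀ x y : X, x ≤ y → dist (f x) (f y) ≤ α * dist x y) (hα0 : 0 ≤ α) (hα1 : α < 1)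
    (h : Relation.ReflTransGen Cmp x y) :
    Tendsto (fun n => dist (f^[n] x) (f^[n] y)) atTop (𝓝 0) := by
  induction h with
  | refl => simp
  | @tail y w _ hyw ih =>
    have hgeom : Tendsto (fun n => α ^ n * dist y w) atTop (𝓝 0) := by
      simpa using (tendsto_pow_atTop_nhds_zero_of_lt_one hα0 hα1).mul_const (dist y w)
    refine squeeze_zero (fun _ => dist_nonneg) (fun n => ?_) (by simpa using ih.add hgeom)
    exact (dist_triangle _ _ _).trans
      (add_le_add_right (dist_iterate_le_of_cmp hf hα hα0 hyw n) _)

end Metric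

/-- Theorem 1.5 (Turinici, TCC case). -/
theorem stmt18 {X : Type*} [MetricSpace X] [PartialOrder X] [CompleteSpace X]
    (f : X → X)
    (hb : ∀ x y : X, Cmp x y → Cmp (f x) (f y))
    (hc : TCC X)
    (hd : ∃ x₀ : X, Cmp x₀ (f x₀))
    (he : ∃ α : ℝ, 0 ≤ α ∧ α < 1 ∧
      ∀ x y : X, x ≤ y → dist (f x) (f y) ≤ α * dist x y)
    (hf : ∀ x y : X, ChainIn (Set.univ : Set X) x y) :
    ∃ z : X, f z = z ∧ (∀ w : X, f w = w → w = z) ∧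
      ∀ x : X, Tendsto (fun n => f^[n] x) atTop (𝓝 z) := by
  obtain ⟨α, hα0, hα1, hα⟩ := he
  obtain ⟨x₀, hx₀⟩ := hd
  obtain ⟨z, hz⟩ :=
    cauchySeq_tendsto_of_complete (cauchySeq_iterate_of_cmp hb hα hα0 hα1 hx₀)
  have hfz : f z = z := isFixedPt_of_tendsto_iterate_of_tcc hb hα hc hx₀ hz
  have hconv (x : X) : Tendsto (fun n => f^[n] x) atTop (𝓝 z) := by
    rw [tendsto_iff_dist_tendsto_zero]
    simpa only [Function.iterate_fixed hfz] using
      tendsto_dist_iterate_of_reflTransGen hb hα hα0 hα1 (hf x z).reflTransGen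
  refine ⟨z, hfz, fun w hw => ?_, hconv⟩
  refine tendsto_nhds_unique ?_ (hconv w)
  simpa only [Function.iterate_fixed hw] using tendsto_const_nhds
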